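/- arXiv:2209.09099 — 2 statements merged into one kernel-verified Lean document; each statement's English description precedes it below -/
import Mathlib

section
/- With U₂, U₃, U₄ as above on ℝ⁴∖{0} and ρ = √(x₁²+y₁²+x₂²+y₂²), the Lie bracket satisfies [U₂, U₃] = -(2/ρ) U₄. In particular [U₂,U₃] is pointwise linearly independent of U₁, U₂, U₃, so the distribution spanned by (U₁,U₂,U₃) is bracket generating on ℝ⁴∖{0}. -/
/-!
Each `U i` is `ρ⁻¹ • (J i *ᵥ q)` for the constant matrix `J i = frameMatrix i`, skew-symmetric
for `i ≠ 0`. Hence `U 1` and `U 2` are tangent to the spheres `ρ = const`, the factor `ρ⁻¹` is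
constant along them, and `[U 1, U 2] = ρ⁻² • [J 1, J 2] q`. The matrices obey the quaternion
relation `J 2 * J 1 - J 1 * J 2 = -2 • J 3`, which gives the formula, and `(U i p)` is an
orthonormal frame, so `U 3 p` is orthogonal to the span of `U 0 p, U 1 p, U 2 p`.
-/

open Matrix VectorField

namespace VectorField

variable {𝕜 : Type*} [NontriviallyNormedField 𝕜]
  {E : Type*} [NormedAddCommGroup E] [NormedSpace 𝕜 E]

theorem lieBracket_smul_smul_of_fderiv_eq_zero {f : E → 𝕜} {V W : E → E} {x : E}
    (hf : DifferentiableAt 𝕜 f x) (hV : DifferentiableAt 𝕜 V x) (hW : DifferentiableAt 𝕜 W x)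
    (hfV : fderiv 𝕜 f x (V x) = 0) (hfW : fderiv 𝕜 f x (W x) = 0) :
    lieBracket 𝕜 (fun y ↦ f y • V y) (fun y ↦ f y • W y) x = f x ^ 2 • lieBracket 𝕜 V W x := by
  rw [lieBracket_smul_left hf hV, lieBracket_smul_right hf hW, map_smul, hfV, hfW]
  simp [smul_smul, sq]

theorem lieBracket_continuousLinearMap (A B : E →L[𝕜] E) (x : E) :
    lieBracket 𝕜 A B x = B (A x) - A (B x) := by
  simp [lieBracket, ContinuousLinearMap.fderiv]

end VectorField

section MulVec

variable {𝕜 : Type*} [NontriviallyNormedField 𝕜] {n : Type*} [Fintype n]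

theorem differentiable_mulVec [CompleteSpace 𝕜] {m : Type*} [Fintype m] (A : Matrix m n 𝕜) :
    Differentiable 𝕜 (A *ᵥ ·) :=
  (LinearMap.toContinuousLinearMap A.mulVecLin).differentiable

theorem lieBracket_mulVec [CompleteSpace 𝕜] (A B : Matrix n n 𝕜) (x : n → 𝕜) :
    lieBracket 𝕜 (A *ᵥ ·) (B *ᵥ ·) x = (B * A - A * B) *ᵥ x := by
  rw [sub_mulVec, ← mulVec_mulVec, ← mulVec_mulVec]
  exact lieBracket_continuousLinearMap (LinearMap.toContinuousLinearMap A.mulVecLin)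
    (LinearMap.toContinuousLinearMap B.mulVecLin) x

theorem hasFDerivAt_dotProduct_self (p : n → 𝕜) :
    HasFDerivAt (fun q : n → 𝕜 => q ⬝ᵥ q)
      (2 • ∑ i, p i • ContinuousLinearMap.proj (R := 𝕜) (φ := fun _ : n => 𝕜) i) p := by
  rw [two_smul, ← Finset.sum_add_distrib]
  exact HasFDerivAt.fun_sum fun i _ => (hasFDerivAt_apply i p).mul (hasFDerivAt_apply i p)

theorem fderiv_dotProduct_self_apply (p v : n → 𝕜) :
    fderiv 𝕜 (fun q : n → 𝕜 => q ⬝ᵥ q) p v = 2 * (p ⬝ᵥ v) := by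
  rw [(hasFDerivAt_dotProduct_self p).fderiv]
  simp [dotProduct, Finset.mul_sum]

end MulVec

section Real

variable {n : Type*} [Fintype n]

theorem dotProduct_self_pos {p : n → ℝ} (hp : p ≠ 0) : 0 < p ⬝ᵥ p := by
  simpa using dotProduct_self_star_pos_iff.2 hp

theorem differentiableAt_inv_sqrt_dotProduct_self {p : n → ℝ} (hp : p ≠ 0) :
    DifferentiableAt ℝ (fun q : n → ℝ => (√(q ⬝ᵥ q))⁻¹) p :=
  ((hasFDerivAt_dotProduct_self p).differentiableAt.sqrt (dotProduct_self_pos hp).ne').inv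
    (Real.sqrt_ne_zero'.2 (dotProduct_self_pos hp))

theorem fderiv_inv_sqrt_dotProduct_self_apply_eq_zero {p v : n → ℝ} (hp : p ≠ 0)
    (hv : p ⬝ᵥ v = 0) : fderiv ℝ (fun q : n → ℝ => (√(q ⬝ᵥ q))⁻¹) p v = 0 := by
  have hN := dotProduct_self_pos hp
  have hh : DifferentiableAt ℝ (fun t : ℝ => (√t)⁻¹) (p ⬝ᵥ p) :=
    (Real.hasDerivAt_sqrt hN.ne').differentiableAt.inv (Real.sqrt_ne_zero'.2 hN)
  change fderiv ℝ ((fun t : ℝ => (√t)⁻¹) ∘ fun q : n → ℝ => q ⬝ᵥ q) p v = 0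
  rw [fderiv_comp (f := fun q : n → ℝ => q ⬝ᵥ q) p hh
      (hasFDerivAt_dotProduct_self p).differentiableAt,
    ContinuousLinearMap.comp_apply, fderiv_dotProduct_self_apply, hv, mul_zero, map_zero]

theorem dotProduct_mulVec_self_eq_zero {J : Matrix n n ℝ} (hJ : Jᵀ = -J) (p : n → ℝ) :
    p ⬝ᵥ (J *ᵥ p) = 0 := by
  have h : p ⬝ᵥ (J *ᵥ p) = -(p ⬝ᵥ (J *ᵥ p)) :=
    calc p ⬝ᵥ (J *ᵥ p) = (Jᵀ *ᵥ p) ⬝ᵥ p := by rw [dotProduct_mulVec, mulVec_transpose]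
      _ = -(p ⬝ᵥ (J *ᵥ p)) := by rw [hJ, neg_mulVec, neg_dotProduct, dotProduct_comm]
  linarith

theorem lieBracket_inv_sqrt_smul_mulVec {J K : Matrix n n ℝ} (hJ : Jᵀ = -J) (hK : Kᵀ = -K)
    {p : n → ℝ} (hp : p ≠ 0) :
    lieBracket ℝ (fun q => (√(q ⬝ᵥ q))⁻¹ • (J *ᵥ q)) (fun q => (√(q ⬝ᵥ q))⁻¹ • (K *ᵥ q)) p =
      (p ⬝ᵥ p)⁻¹ • ((K * J - J * K) *ᵥ p) := by
  rw [lieBracket_smul_smul_of_fderiv_eq_zero (differentiableAt_inv_sqrt_dotProduct_self hp)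
      (differentiable_mulVec J p) (differentiable_mulVec K p)
      (fderiv_inv_sqrt_dotProduct_self_apply_eq_zero hp (dotProduct_mulVec_self_eq_zero hJ p))
      (fderiv_inv_sqrt_dotProduct_self_apply_eq_zero hp (dotProduct_mulVec_self_eq_zero hK p)),
    lieBracket_mulVec, inv_pow, Real.sq_sqrt (dotProduct_self_pos hp).le]

end Real

theorem notMem_span_of_dotProduct_eq_zero {n R : Type*} [Fintype n] [CommSemiring R]
    {S : Set (n → R)} {w : n → R} (hw : w ⬝ᵥ w ≠ 0) (hS : ∀ u ∈ S, w ⬝ᵥ u = 0) :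
    w ∉ Submodule.span R S := by
  intro hmem
  refine hw (Submodule.span_induction (p := fun u _ => w ⬝ᵥ u = 0) hS ?_ ?_ ?_ hmem)
  · simp
  · intro x y _ _ hx hy; simp [dotProduct_add, hx, hy]
  · intro c x _ hx; simp [dotProduct_smul, hx]

/-- `U i q = ρ(q)⁻¹ • (frameMatrix i *ᵥ q)`. -/
def frameMatrix : Fin 4 → Matrix (Fin 4) (Fin 4) ℝ :=
  ![1,
    !![0, 0, 0, 1; 0, 0, 1, 0; 0, -1, 0, 0; -1, 0, 0, 0],
    !![0, 0, 1, 0; 0, 0, 0, -1; -1, 0, 0, 0; 0, 1, 0, 0],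
    !![0, 1, 0, 0; -1, 0, 0, 0; 0, 0, 0, 1; 0, 0, -1, 0]]

theorem frameMatrix_mulVec (q : Fin 4 → ℝ) :
    (fun i => frameMatrix i *ᵥ q) =
      ![![q 0, q 1, q 2, q 3], ![q 3, q 2, -q 1, -q 0],
        ![q 2, -q 3, -q 0, q 1], ![q 1, -q 0, q 3, -q 2]] := by
  ext i j
  fin_cases i <;> fin_cases j <;> simp [frameMatrix, mulVec, dotProduct, Fin.sum_univ_four]

theorem transpose_frameMatrix {i : Fin 4} (hi : i ≠ 0) : (frameMatrix i)ᵀ = -frameMatrix i := by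
  fin_cases i
  · exact absurd rfl hi
  all_goals
    ext a b
    fin_cases a <;> fin_cases b <;> simp [frameMatrix]

theorem frameMatrix_commutator :
    frameMatrix 2 * frameMatrix 1 - frameMatrix 1 * frameMatrix 2 = (-2 : ℝ) • frameMatrix 3 := by
  ext a b
  fin_cases a <;> fin_cases b <;> simp [frameMatrix] <;> norm_num

theorem mulVec_frameMatrix_dotProduct (p : Fin 4 → ℝ) (i j : Fin 4) :
    (frameMatrix i *ᵥ p) ⬝ᵥ (frameMatrix j *ᵥ p) = if i = j then p ⬝ᵥ p else 0 := by
  fin_cases i <;> fin_cases j <;>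
    simp [frameMatrix, mulVec, dotProduct, Fin.sum_univ_four] <;> ring

/-- On `ℝ⁴∖{0}` the Lie bracket of the vector fields `U₂,U₃` satisfies
`[U₂,U₃] = -(2/ρ) U₄`; in particular `[U₂,U₃]` does not lie in the span of
`U₁,U₂,U₃` pointwise, so the distribution spanned by `(U₁,U₂,U₃)` is bracket
generating on `ℝ⁴∖{0}`. The bracket is `[X,Y](p) = DY(p)[X(p)] - DX(p)[Y(p)]`. -/
theorem bracket_U2_U3 (p : Fin 4 → ℝ) (hp : p ≠ 0) :
    let ρ : (Fin 4 → ℝ) → ℝ := fun q => Real.sqrt (q 0^2 + q 1^2 + q 2^2 + q 3^2)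
    let U : Fin 4 → (Fin 4 → ℝ) → (Fin 4 → ℝ) := fun i q =>
      (ρ q)⁻¹ • (![![q 0, q 1, q 2, q 3],
                   ![q 3, q 2, -q 1, -q 0],
                   ![q 2, -q 3, -q 0, q 1],
                   ![q 1, -q 0, q 3, -q 2]] i)
    let bracket : Fin 4 → ℝ :=
      fderiv ℝ (U 2) p (U 1 p) - fderiv ℝ (U 1) p (U 2 p)
    bracket = (-(2 / ρ p)) • U 3 p ∧
    bracket ∉ Submodule.span ℝ ({U 0 p, U 1 p, U 2 p} : Set (Fin 4 → ℝ)) := by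
  intro ρ U bracket
  have hN := dotProduct_self_pos hp
  have hρ : ρ = fun q => √(q ⬝ᵥ q) := by
    funext q; simp [ρ, dotProduct, Fin.sum_univ_four, sq]
  have hU : ∀ i, U i = fun q => (√(q ⬝ᵥ q))⁻¹ • (frameMatrix i *ᵥ q) := by
    intro i; funext q; simp only [U, hρ, ← frameMatrix_mulVec]
  have hbracket : bracket = (-(2 / ρ p)) • U 3 p := by
    calc bracket = lieBracket ℝ (U 1) (U 2) p := rfl
      _ = (p ⬝ᵥ p)⁻¹ • ((-2 : ℝ) • frameMatrix 3 *ᵥ p) := by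
        rw [hU, hU, lieBracket_inv_sqrt_smul_mulVec (transpose_frameMatrix (by decide))
          (transpose_frameMatrix (by decide)) hp, frameMatrix_commutator, smul_mulVec]
      _ = (-(2 / ρ p)) • U 3 p := by
        simp only [hU, hρ, smul_smul]
        congr 1
        field_simp
        rw [Real.sq_sqrt hN.le]
  refine ⟨hbracket, notMem_span_of_dotProduct_eq_zero ?_ ?_⟩
  · simp [hbracket, hU, hρ, mulVec_frameMatrix_dotProduct, hN.ne', (Real.sqrt_pos.2 hN).ne']
  · rintro u (rfl | rfl | rfl) <;> simp [hbracket, hU, mulVec_frameMatrix_dotProduct]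
end

section
/- On the sphere S^{2n+1} = {x ∈ ℝ^{2n+2} : |x| = 1} with one-form ω = (1/(2k²)) ∑_{m=1}^{n+1}(x_{2m-1} dx_{2m} - x_{2m} dx_{2m-1}) (k > 0), a point of the equatorial sphere S = {x ∈ S^{2n+1} : x_{2n+2} = 0} is characteristic (i.e. ω vanishes on T_x S) if and only if x₁ = ⋯ = x_{2n} = 0 and x_{2n+1} = ±1. Thus S has exactly two characteristic points, the two poles. -/
lemma sum_pair_aux (N : ℕ) (f : ℕ → ℝ) :
    ∑ i ∈ Finset.range (2*N), f i = ∑ m ∈ Finset.range N, (f (2*m) + f (2*m+1)) := by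
  induction N with
  | zero => simp
  | succ N ih =>
      have h : 2*(N+1) = 2*N+1+1 := by ring
      rw [h, Finset.sum_range_succ, Finset.sum_range_succ, Finset.sum_range_succ, ih]
      ring

/-- On the equatorial sphere `S = {x ∈ S^{2n+1} : x_{2n+2} = 0}` of the sphere
`S^{2n+1} ⊂ ℝ^{2n+2}` with one-form
`ω = (1/(2k²)) ∑_{m=1}^{n+1}(x_{2m-1} dx_{2m} - x_{2m} dx_{2m-1})` (`k > 0`), a
point `x` is characteristic — i.e. `ω_x` vanishes on
`T_x S = {v : ⟨v,x⟩ = 0, v_{2n+2} = 0}` — if and only if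
`x₁ = ⋯ = x_{2n} = 0` and `x_{2n+1} = ±1`: the two poles.
Coordinates are `0`-indexed: `x_i` of the paper is `x (i-1)`. -/
theorem characteristic_points_sphere (n : ℕ) (hn : 1 ≤ n) (k : ℝ) (hk : 0 < k)
    (x : ℕ → ℝ)
    (hsphere : ∑ i ∈ Finset.range (2*n+2), x i ^ 2 = 1)
    (hS : x (2*n+1) = 0) :
    (∀ v : ℕ → ℝ, (∑ i ∈ Finset.range (2*n+2), v i * x i) = 0 →
        v (2*n+1) = 0 →
        (1/(2*k^2)) * ∑ m ∈ Finset.range (n+1),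
          (x (2*m) * v (2*m+1) - x (2*m+1) * v (2*m)) = 0)
      ↔ ((∀ i < 2*n, x i = 0) ∧ (x (2*n) = 1 ∨ x (2*n) = -1)) := by
  constructor
  · intro h
    set v : ℕ → ℝ := fun i => if i < 2*n then (if i % 2 = 0 then -x (i+1) else x (i-1)) else 0
      with hv
    have hv2m : ∀ m, m < n → v (2*m) = -x (2*m+1) := by
      intro m hm
      simp only [hv]
      rw [if_pos (by omega), if_pos (by omega)]
    have hv2m1 : ∀ m, m < n → v (2*m+1) = x (2*m) := by
      intro m hm
      simp only [hv]
      rw [if_pos (by omega), if_neg (by omega)]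
      congr 1
    have hvbig : ∀ i, 2*n ≤ i → v i = 0 := by
      intro i hi; simp only [hv]; rw [if_neg (by omega)]
    have horth : ∑ i ∈ Finset.range (2*n+2), v i * x i = 0 := by
      have h2 : 2*n+2 = 2*(n+1) := by ring
      rw [h2, sum_pair_aux]
      apply Finset.sum_eq_zero
      intro m hm
      simp only [Finset.mem_range] at hm
      rcases Nat.lt_or_ge m n with hm' | hm'
      · rw [hv2m m hm', hv2m1 m hm']; ring
      · rw [hvbig (2*m) (by omega), hvbig (2*m+1) (by omega)]; ring
    have hlast : v (2*n+1) = 0 := hvbig _ (by omega)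
    have hω := h v horth hlast
    have hsum : ∑ m ∈ Finset.range (n+1),
        (x (2*m) * v (2*m+1) - x (2*m+1) * v (2*m))
        = ∑ i ∈ Finset.range (2*n), x i ^ 2 := by
      rw [Finset.sum_range_succ, hvbig (2*n) (by omega), hvbig (2*n+1) (by omega),
        sum_pair_aux]
      rw [show (x (2*n) * 0 - x (2*n+1) * 0) = 0 by ring, add_zero]
      apply Finset.sum_congr rfl
      intro m hm
      simp only [Finset.mem_range] at hm
      rw [hv2m m hm, hv2m1 m hm]; ring
    rw [hsum] at hω
    have hk2 : (1:ℝ)/(2*k^2) ≠ 0 := by positivity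
    have hzero : ∑ i ∈ Finset.range (2*n), x i ^ 2 = 0 := by
      rcases mul_eq_zero.mp hω with h' | h'
      · exact absurd h' hk2
      · exact h'
    have hx0 : ∀ i < 2*n, x i = 0 := by
      intro i hi
      have := (Finset.sum_eq_zero_iff_of_nonneg (fun j _ => sq_nonneg (x j))).mp hzero
        i (Finset.mem_range.mpr hi)
      exact pow_eq_zero_iff (by norm_num) |>.mp this
    refine ⟨hx0, ?_⟩
    have : x (2*n) ^ 2 = 1 := by
      rw [Finset.sum_range_succ, Finset.sum_range_succ, hzero, hS] at hsphere
      nlinarith [hsphere]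
    exact mul_self_eq_one_iff.mp (by nlinarith)
  · rintro ⟨hx0, _⟩ v hvx hvlast
    have : ∑ m ∈ Finset.range (n+1),
        (x (2*m) * v (2*m+1) - x (2*m+1) * v (2*m)) = 0 := by
      rw [Finset.sum_range_succ, hS, hvlast]
      rw [show (x (2*n) * 0 - 0 * v (2*n)) = 0 by ring, add_zero]
      apply Finset.sum_eq_zero
      intro m hm
      simp only [Finset.mem_range] at hm
      rw [hx0 (2*m) (by omega), hx0 (2*m+1) (by omega)]; ring
    rw [this, mul_zero]
end
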